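/- The quotients are 2-dimensional: equivalently, the restriction map gives the isomorphism J_b(ℚ_p) ≅ GSp(C). Precisely: the assignment g ↦ g|_C defines a group isomorphism from the group J = {g : N → N a K₀-linear bijection such that g(N₀) = N₀, g(N₁) = N₁, g∘Π = Π∘g, g∘F = F∘g, and there exists c ∈ K₀^× with (gx, gy) = c·(x, y) for all x, y ∈ N} onto the symplectic similitude group GSp(C, (·,·)₀) = {h : C → C a ℚ_p-linear bijection such that there exists c ∈ ℚ_p^× with (hx, hy)₀ = c·(x, y)₀ for all x, y ∈ C}. -/

import Mathlib

noncomputable section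

namespace QURZ

/-- The fixed subfield of a field automorphism (for `σ` the Frobenius of `K₀`, this
is `ℚ_p`). -/
def fixedSubfield {K : Type*} [Field K] (σ : K ≃+* K) : Subfield K :=
  { RingHom.eqLocus (σ : K →+* K) (RingHom.id K) with
    inv_mem' := fun x hx => by
      have h : σ x = x := hx
      show σ x⁻¹ = x⁻¹
      rw [map_inv₀, h] }

variable {K₀ : Type*} [Field K₀] {N : Type*} [AddCommGroup N] [Module K₀ N]

/-- `C = N₀^{τ=1}`: the vectors `x ∈ N₀` with `τ x = x`, i.e. `F x = Π x`
(where `τ = Π⁻¹ ∘ F`), as a vector space over the fixed field `ℚ_p` of `σ`. -/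
def tauFixed0 (σ : K₀ ≃+* K₀) (N₀ : Submodule K₀ N) (Pmap : N →ₗ[K₀] N)
    (F : N →ₛₗ[(σ : K₀ →+* K₀)] N) : Submodule ↥(fixedSubfield σ) N where
  carrier := {x | x ∈ N₀ ∧ F x = Pmap x}
  zero_mem' := ⟨N₀.zero_mem, by rw [map_zero, map_zero]⟩
  add_mem' := by
    intro a b ha hb
    exact ⟨N₀.add_mem ha.1 hb.1, by rw [map_add, map_add, ha.2, hb.2]⟩
  smul_mem' := by
    intro c x hx
    constructor
    · show (c : K₀) • x ∈ N₀
      exact N₀.smul_mem _ hx.1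
    · show F ((c : K₀) • x) = Pmap ((c : K₀) • x)
      rw [map_smulₛₗ, map_smul]
      show σ (c : K₀) • F x = (c : K₀) • Pmap x
      have hc : σ (c : K₀) = (c : K₀) := c.2
      rw [hc, hx.2]

/-- The group `J = J_b(ℚ_p)`: all `K₀`-linear bijections of `N` preserving `N₀` and
`N₁`, commuting with `Π` and `F`, and scaling the symplectic form by some
`c ∈ K₀ˣ`. -/
def Jgrp (σ : K₀ ≃+* K₀) (form : N →ₗ[K₀] N →ₗ[K₀] K₀) (N₀ N₁ : Submodule K₀ N)
    (Pmap : N →ₗ[K₀] N) (F : N →ₛₗ[(σ : K₀ →+* K₀)] N) :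
    Subgroup (N ≃ₗ[K₀] N) where
  carrier := {g | Submodule.map (g : N →ₗ[K₀] N) N₀ = N₀ ∧
    Submodule.map (g : N →ₗ[K₀] N) N₁ = N₁ ∧
    (∀ x, g (Pmap x) = Pmap (g x)) ∧
    (∀ x, g (F x) = F (g x)) ∧
    ∃ c : K₀, c ≠ 0 ∧ ∀ x y, form (g x) (g y) = c * form x y}
  one_mem' := by
    refine ⟨by simp, by simp, fun x => rfl, fun x => rfl, 1, one_ne_zero, fun x y => by simp⟩
  mul_mem' := by
    rintro a b ⟨ha0, ha1, haP, haF, ca, hca, haf⟩ ⟨hb0, hb1, hbP, hbF, cb, hcb, hbf⟩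
    have hab : ∀ x, (a * b) x = a (b x) := fun x => rfl
    have hcoe : ((a * b : N ≃ₗ[K₀] N) : N →ₗ[K₀] N)
        = (a : N →ₗ[K₀] N) ∘ₗ (b : N →ₗ[K₀] N) := by
      ext z; rfl
    refine ⟨?_, ?_, fun x => ?_, fun x => ?_, ca * cb, mul_ne_zero hca hcb, fun x y => ?_⟩
    · rw [hcoe, Submodule.map_comp, hb0, ha0]
    · rw [hcoe, Submodule.map_comp, hb1, ha1]
    · rw [hab, hab, hbP, haP]
    · rw [hab, hab, hbF, haF]
    · rw [hab, hab, haf, hbf, mul_assoc]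
  inv_mem' := by
    rintro a ⟨ha0, ha1, haP, haF, ca, hca, haf⟩
    have hcoe : ((a⁻¹ : N ≃ₗ[K₀] N) : N →ₗ[K₀] N) ∘ₗ (a : N →ₗ[K₀] N) = LinearMap.id := by
      ext z
      show a⁻¹ (a z) = z
      show (a⁻¹ * a) z = z
      rw [inv_mul_cancel]
      rfl
    have hinva : ∀ z, a⁻¹ (a z) = z := fun z => by
      show (a⁻¹ * a) z = z
      rw [inv_mul_cancel]
      rfl
    have hainv : ∀ z, a (a⁻¹ z) = z := fun z => by
      show (a * a⁻¹) z = z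
      rw [mul_inv_cancel]
      rfl
    refine ⟨?_, ?_, fun x => ?_, fun x => ?_, ca⁻¹, inv_ne_zero hca, fun x y => ?_⟩
    · conv_lhs => rw [← ha0]
      rw [← Submodule.map_comp, hcoe, Submodule.map_id]
    · conv_lhs => rw [← ha1]
      rw [← Submodule.map_comp, hcoe, Submodule.map_id]
    · have h2 := haP (a⁻¹ x)
      rw [hainv x] at h2
      calc a⁻¹ (Pmap x) = a⁻¹ (a (Pmap (a⁻¹ x))) := by rw [h2]
        _ = Pmap (a⁻¹ x) := hinva _
    · have h2 := haF (a⁻¹ x)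
      rw [hainv x] at h2
      calc a⁻¹ (F x) = a⁻¹ (a (F (a⁻¹ x))) := by rw [h2]
        _ = F (a⁻¹ x) := hinva _
    · have h := haf (a⁻¹ x) (a⁻¹ y)
      rw [hainv x, hainv y] at h
      rw [h, ← mul_assoc, inv_mul_cancel₀ hca, one_mul]

/-- The symplectic similitude group `GSp(C, (·,·)₀)` where `(x, y)₀ = (x, Π y)`:
all `ℚ_p`-linear bijections of `C` scaling the form `(·,·)₀` by some `c ∈ ℚ_pˣ`. -/
def GSpGrp (σ : K₀ ≃+* K₀) (form : N →ₗ[K₀] N →ₗ[K₀] K₀) (N₀ : Submodule K₀ N)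
    (Pmap : N →ₗ[K₀] N) (F : N →ₛₗ[(σ : K₀ →+* K₀)] N) :
    Subgroup (↥(tauFixed0 σ N₀ Pmap F) ≃ₗ[↥(fixedSubfield σ)] ↥(tauFixed0 σ N₀ Pmap F)) where
  carrier := {h | ∃ c : ↥(fixedSubfield σ), c ≠ 0 ∧
    ∀ x y : ↥(tauFixed0 σ N₀ Pmap F),
      form (h x : N) (Pmap (h y : N)) = (c : K₀) * form (x : N) (Pmap (y : N))}
  one_mem' := ⟨1, one_ne_zero, fun x y => by simp⟩
  mul_mem' := by
    rintro a b ⟨c, hc, hcf⟩ ⟨d, hd, hdf⟩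
    refine ⟨c * d, mul_ne_zero hc hd, fun x y => ?_⟩
    have hab : ∀ z, (a * b) z = a (b z) := fun z => rfl
    rw [hab, hab, hcf, hdf]
    push_cast
    ring
  inv_mem' := by
    rintro a ⟨c, hc, hcf⟩
    refine ⟨c⁻¹, inv_ne_zero hc, fun x y => ?_⟩
    have h := hcf (a⁻¹ x) (a⁻¹ y)
    have hx : a (a⁻¹ x) = x := by
      show (a * a⁻¹) x = x
      rw [mul_inv_cancel]
      rfl
    have hy : a (a⁻¹ y) = y := by
      show (a * a⁻¹) y = y
      rw [mul_inv_cancel]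
      rfl
    rw [hx, hy] at h
    rw [h, ← mul_assoc]
    have hcK : (c : K₀) ≠ 0 := fun h0 => hc (Subtype.ext h0)
    have hone : ((c⁻¹ : ↥(fixedSubfield σ)) : K₀) * (c : K₀) = 1 := by
      push_cast
      exact inv_mul_cancel₀ hcK
    rw [hone, one_mul]


/-! Put `S = C ∪ Π C`. As `C` spans `N₀`, `Π N₀ = N₁` and `N = N₀ ⊕ N₁`, the set `S` spans `N`
over `K₀`; so an element of `J`, commuting with `Π`, is determined by its restriction to `C`.
The similitude factor `c` of `g ∈ J` lies in `ℚ_p` because `g` commutes with `F`, which scales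
the form σ-semilinearly. Conversely, counting dimensions, a `ℚ_p`-basis `b` of `C` together
with `Π b` is a `K₀`-basis of `N`; sending it to `h b, Π (h b)` extends `h ∈ GSp(C)` to a
`K₀`-linear `g` commuting with `Π`, and that `g` commutes with `F`, preserves `N₀, N₁` and
scales the form by `c` are all checked on `S`. -/

section SpanningSet

variable {N₀ N₁ : Submodule K₀ N} {P : N →ₗ[K₀] N}

theorem span_union_image_eq_top {s : Set N} (hs : Submodule.span K₀ s = N₀)
    (hP : N₀.map P = N₁) (hcompl : IsCompl N₀ N₁) : Submodule.span K₀ (s ∪ P '' s) = ⊤ := by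
  rw [Submodule.span_union, Submodule.span_image, hs, hP, hcompl.sup_eq_top]

theorem eq_of_eqOn_of_comm {ρ : K₀ →+* K₀} {s : Set N} (hs : Submodule.span K₀ s = N₀)
    (hP : N₀.map P = N₁) (hcompl : IsCompl N₀ N₁) {u v : N →ₛₗ[ρ] N}
    (hu : ∀ x, u (P x) = P (u x)) (hv : ∀ x, v (P x) = P (v x)) (h : Set.EqOn u v s) :
    u = v := by
  refine LinearMap.ext_on (span_union_image_eq_top hs hP hcompl) (h.union ?_)
  rintro _ ⟨x, hx, rfl⟩
  rw [hu, hv, h hx]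

end SpanningSet

theorem bilin_ext_on {s : Set N} (hs : Submodule.span K₀ s = ⊤)
    {B₁ B₂ : N →ₗ[K₀] N →ₗ[K₀] K₀} (h : ∀ x ∈ s, ∀ y ∈ s, B₁ x y = B₂ x y) : B₁ = B₂ :=
  LinearMap.ext_on hs fun x hx => LinearMap.ext_on hs fun y hy => h x hx y hy

theorem ne_zero_of_comp_self_eq_smul [Nontrivial N] {P : N →ₗ[K₀] N}
    (hP : Function.Injective P) {a : K₀} (hPP : ∀ x, P (P x) = a • x) : a ≠ 0 := by
  rintro rfl
  obtain ⟨x, hx⟩ := exists_ne (0 : N)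
  exact hx ((hP.comp hP) (by simp [hPP]))

section LinearExtension

variable {k : Subfield K₀} {C : Submodule k N} {N₀ N₁ : Submodule K₀ N} {P : N →ₗ[K₀] N}

theorem span_range_basis {ι : Type*} (b : Module.Basis ι k C) :
    Submodule.span K₀ (Set.range fun i => (b i : N)) = Submodule.span K₀ (C : Set N) := by
  rw [← Submodule.span_span_of_tower k,
    show (Set.range fun i => (b i : N)) = C.subtype '' Set.range b from Set.range_comp _ _,
    ← Submodule.map_span, b.span_eq, Submodule.map_subtype_top]

def basisSumImage {ι : Type*} [Fintype ι] (b : Module.Basis ι k C)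
    (hC : Submodule.span K₀ (C : Set N) = N₀) (hP : N₀.map P = N₁) (hcompl : IsCompl N₀ N₁)
    (hcard : Fintype.card ι + Fintype.card ι = Module.finrank K₀ N) :
    Module.Basis (ι ⊕ ι) K₀ N :=
  basisOfTopLeSpanOfCardEqFinrank (Sum.elim (fun i => (b i : N)) fun i => P (b i))
    (by
      rw [Set.Sum.elim_range, Set.range_comp' P]
      exact (span_union_image_eq_top ((span_range_basis b).trans hC) hP hcompl).ge)
    (by rw [Fintype.card_sum, hcard])

theorem basisSumImage_inl {ι : Type*} [Fintype ι] (b : Module.Basis ι k C)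
    (hC : Submodule.span K₀ (C : Set N) = N₀) (hP : N₀.map P = N₁) (hcompl : IsCompl N₀ N₁)
    (hcard : Fintype.card ι + Fintype.card ι = Module.finrank K₀ N) (i : ι) :
    basisSumImage b hC hP hcompl hcard (Sum.inl i) = b i :=
  congrFun (coe_basisOfTopLeSpanOfCardEqFinrank _ _ _) (Sum.inl i)

theorem basisSumImage_inr {ι : Type*} [Fintype ι] (b : Module.Basis ι k C)
    (hC : Submodule.span K₀ (C : Set N) = N₀) (hP : N₀.map P = N₁) (hcompl : IsCompl N₀ N₁)
    (hcard : Fintype.card ι + Fintype.card ι = Module.finrank K₀ N) (i : ι) :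
    basisSumImage b hC hP hcompl hcard (Sum.inr i) = P (b i) :=
  congrFun (coe_basisOfTopLeSpanOfCardEqFinrank _ _ _) (Sum.inr i)

theorem exists_linearEquiv_extend [FiniteDimensional k C] (h : C ≃ₗ[k] C)
    (hC : Submodule.span K₀ (C : Set N) = N₀) (hP : N₀.map P = N₁) (hcompl : IsCompl N₀ N₁)
    {a : K₀} (hPP : ∀ x, P (P x) = a • x)
    (hdim : Module.finrank k C + Module.finrank k C = Module.finrank K₀ N) :
    ∃ g : N ≃ₗ[K₀] N, (∀ x : C, g x = h x) ∧ ∀ x, g (P x) = P (g x) := by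
  let b := Module.finBasis k C
  have hcard : Fintype.card (Fin (Module.finrank k C)) + Fintype.card (Fin (Module.finrank k C))
      = Module.finrank K₀ N := by rw [Fintype.card_fin, hdim]
  let bN := basisSumImage b hC hP hcompl hcard
  have hbN_inl : ∀ i, bN (Sum.inl i) = b i := basisSumImage_inl b hC hP hcompl hcard
  have hbN_inr : ∀ i, bN (Sum.inr i) = P (b i) := basisSumImage_inr b hC hP hcompl hcard
  let g := bN.equiv (basisSumImage (b.map h) hC hP hcompl hcard) (Equiv.refl _)
  have hgb : ∀ i, g (b i) = h (b i) := fun i => by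
    rw [← hbN_inl, bN.equiv_apply, Equiv.refl_apply, basisSumImage_inl, b.map_apply]
  have hgPb : ∀ i, g (P (b i)) = P (h (b i)) := fun i => by
    rw [← hbN_inr, bN.equiv_apply, Equiv.refl_apply, basisSumImage_inr, b.map_apply]
  refine ⟨g, fun x => ?_, fun x => ?_⟩
  · have hext : (g.toLinearMap.restrictScalars k).comp C.subtype = C.subtype.comp h.toLinearMap :=
      b.ext fun i => hgb i
    exact LinearMap.congr_fun hext x
  · have hext : g.toLinearMap.comp P = P.comp g.toLinearMap := by
      refine bN.ext fun j => ?_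
      rcases j with i | i
      · simp only [LinearMap.comp_apply, LinearEquiv.coe_coe, hbN_inl, hgPb, hgb]
      · simp only [LinearMap.comp_apply, LinearEquiv.coe_coe, hbN_inr, hPP, map_smul, hgPb, hgb]
    exact LinearMap.congr_fun hext x

theorem image_eq_of_eqOn_linearEquiv {g : N →ₗ[K₀] N} (h : C ≃ₗ[k] C)
    (hgC : ∀ x : C, g x = h x) : g '' (C : Set N) = C := by
  ext y
  constructor
  · rintro ⟨x, hx, rfl⟩
    rw [hgC ⟨x, hx⟩]
    exact (h _).2
  · intro hy
    exact ⟨h.symm ⟨y, hy⟩, (h.symm _).2, by rw [hgC, h.apply_symm_apply]⟩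

theorem map_eq_of_eqOn_linearEquiv (hC : Submodule.span K₀ (C : Set N) = N₀)
    (hP : N₀.map P = N₁) {h : C ≃ₗ[k] C} {g : N →ₗ[K₀] N} (hgC : ∀ x : C, g x = h x)
    (hgP : ∀ x, g (P x) = P (g x)) : N₀.map g = N₀ ∧ N₁.map g = N₁ := by
  have h0 : N₀.map g = N₀ := by
    rw [← hC, Submodule.map_span, image_eq_of_eqOn_linearEquiv h hgC]
  refine ⟨h0, ?_⟩
  rw [← hP, ← Submodule.map_comp, show g ∘ₗ P = P ∘ₗ g from LinearMap.ext hgP,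
    Submodule.map_comp, h0]

end LinearExtension

section Restriction

variable {σ : K₀ ≃+* K₀} {form : N →ₗ[K₀] N →ₗ[K₀] K₀} {N₀ N₁ : Submodule K₀ N}
  {Pmap : N →ₗ[K₀] N} {F : N →ₛₗ[(σ : K₀ →+* K₀)] N}

theorem apply_mem_tauFixed0 {g : N →ₗ[K₀] N} (hg0 : N₀.map g = N₀)
    (hgP : ∀ x, g (Pmap x) = Pmap (g x)) (hgF : ∀ x, g (F x) = F (g x)) {x : N}
    (hx : x ∈ tauFixed0 σ N₀ Pmap F) : g x ∈ tauFixed0 σ N₀ Pmap F :=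
  ⟨hg0 ▸ Submodule.mem_map_of_mem hx.1, by rw [← hgF, hx.2, hgP]⟩

theorem map_tauFixed0_of_mem_Jgrp {g : N ≃ₗ[K₀] N} (hg : g ∈ Jgrp σ form N₀ N₁ Pmap F) :
    (tauFixed0 σ N₀ Pmap F).map (g.restrictScalars (fixedSubfield σ) : N →ₗ[fixedSubfield σ] N)
      = tauFixed0 σ N₀ Pmap F := by
  obtain ⟨hg0', -, hgP', hgF', -⟩ := inv_mem hg
  obtain ⟨hg0, -, hgP, hgF, -⟩ := hg
  refine le_antisymm ?_ fun x hx => ⟨g⁻¹ x, apply_mem_tauFixed0 hg0' hgP' hgF' hx, ?_⟩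
  · rintro _ ⟨x, hx, rfl⟩
    exact apply_mem_tauFixed0 hg0 hgP hgF hx
  · exact g.apply_symm_apply x

variable (σ form N₀ N₁ Pmap F) in
def restrictTauFixed0 : Jgrp σ form N₀ N₁ Pmap F →*
    (tauFixed0 σ N₀ Pmap F ≃ₗ[fixedSubfield σ] tauFixed0 σ N₀ Pmap F) where
  toFun g :=
    (g.1.restrictScalars (fixedSubfield σ)).ofSubmodules _ _ (map_tauFixed0_of_mem_Jgrp g.2)
  map_one' := by ext; rfl
  map_mul' _ _ := by ext; rfl

theorem restrictTauFixed0_apply (g : Jgrp σ form N₀ N₁ Pmap F) (x : tauFixed0 σ N₀ Pmap F) :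
    (restrictTauFixed0 σ form N₀ N₁ Pmap F g x : N) = (g : N ≃ₗ[K₀] N) x :=
  rfl

theorem similitudeFactor_fixed {a c : K₀} (ha : a ≠ 0)
    (hF_form : ∀ x y, form (F x) (F y) = a * σ (form x y)) (hform : form ≠ 0) {g : N → N}
    (hgF : ∀ x, g (F x) = F (g x)) (hgc : ∀ x y, form (g x) (g y) = c * form x y) :
    σ c = c := by
  obtain ⟨x, y, hxy⟩ : ∃ x y, form x y ≠ 0 := by
    by_contra! h
    exact hform (LinearMap.ext₂ h)
  refine mul_right_cancel₀ (mul_ne_zero ha ((map_ne_zero σ).2 hxy)) ?_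
  calc σ c * (a * σ (form x y)) = a * σ (c * form x y) := by rw [map_mul]; ring
    _ = form (g (F x)) (g (F y)) := by rw [hgF, hgF, hF_form, hgc]
    _ = c * (a * σ (form x y)) := by rw [hgc, hF_form]

theorem restrictTauFixed0_mem_GSpGrp {a : K₀} (ha : a ≠ 0)
    (hF_form : ∀ x y, form (F x) (F y) = a * σ (form x y)) (hform : form ≠ 0)
    (g : Jgrp σ form N₀ N₁ Pmap F) :
    restrictTauFixed0 σ form N₀ N₁ Pmap F g ∈ GSpGrp σ form N₀ Pmap F := by
  obtain ⟨-, -, hgP, hgF, c, hc, hgc⟩ := g.2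
  refine ⟨⟨c, similitudeFactor_fixed ha hF_form hform hgF hgc⟩,
    fun h0 => hc (congrArg Subtype.val h0), fun x y => ?_⟩
  rw [restrictTauFixed0_apply, restrictTauFixed0_apply, ← hgP, hgc]

theorem restrictTauFixed0_injective
    (hC : Submodule.span K₀ (tauFixed0 σ N₀ Pmap F : Set N) = N₀) (hP : N₀.map Pmap = N₁)
    (hcompl : IsCompl N₀ N₁) : Function.Injective (restrictTauFixed0 σ form N₀ N₁ Pmap F) := by
  intro g₁ g₂ h
  have hC_eq : Set.EqOn (g₁ : N ≃ₗ[K₀] N) (g₂ : N ≃ₗ[K₀] N)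
      (tauFixed0 σ N₀ Pmap F) := fun x hx => by
    simpa only [restrictTauFixed0_apply] using congrArg (fun e => (e ⟨x, hx⟩ : N)) h
  exact Subtype.ext (LinearEquiv.toLinearMap_injective
    (eq_of_eqOn_of_comm (u := (g₁ : N ≃ₗ[K₀] N)) hC hP hcompl g₁.2.2.2.1 g₂.2.2.2.1 hC_eq))

section Extension

variable (hC : Submodule.span K₀ (tauFixed0 σ N₀ Pmap F : Set N) = N₀)
  (hP : N₀.map Pmap = N₁) (hcompl : IsCompl N₀ N₁)
  {h : tauFixed0 σ N₀ Pmap F ≃ₗ[fixedSubfield σ] tauFixed0 σ N₀ Pmap F} {g : N →ₗ[K₀] N}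
  (hgC : ∀ x : tauFixed0 σ N₀ Pmap F, g x = h x) (hgP : ∀ x, g (Pmap x) = Pmap (g x))

include hC hP hcompl hgC hgP

theorem comm_F_of_eqOn_tauFixed0 (hPF : ∀ x, Pmap (F x) = F (Pmap x)) (x : N) :
    g (F x) = F (g x) := by
  refine LinearMap.congr_fun (eq_of_eqOn_of_comm (u := g.comp F) (v := F.comp g) hC hP hcompl
    (fun y => ?_) (fun y => ?_) fun y hy => ?_) x
  · simp only [LinearMap.comp_apply, ← hPF, hgP]
  · simp only [LinearMap.comp_apply, hPF, hgP]
  · have hgy : g y ∈ tauFixed0 σ N₀ Pmap F := hgC ⟨y, hy⟩ ▸ (h _).2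
    simp only [LinearMap.comp_apply, hy.2, hgP, hgy.2]

theorem similitude_of_eqOn_tauFixed0 (hP_form : ∀ x y, form (Pmap x) y = form x (Pmap y))
    (hiso0 : ∀ x ∈ N₀, ∀ y ∈ N₀, form x y = 0) (hiso1 : ∀ x ∈ N₁, ∀ y ∈ N₁, form x y = 0)
    {c : K₀} (hh : ∀ x y : tauFixed0 σ N₀ Pmap F,
      form (h x : N) (Pmap (h y : N)) = c * form (x : N) (Pmap (y : N))) (x y : N) :
    form (g x) (g y) = c * form x y := by
  have hPmem : ∀ z ∈ N₀, Pmap z ∈ N₁ := fun z hz => hP ▸ Submodule.mem_map_of_mem hz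
  have hgN₀ : ∀ z ∈ tauFixed0 σ N₀ Pmap F, g z ∈ N₀ := fun z hz => hgC ⟨z, hz⟩ ▸ (h _).2.1
  have hB : form.compl₁₂ g g = c • form := by
    refine bilin_ext_on (span_union_image_eq_top hC hP hcompl) ?_
    rintro x (hx | ⟨x, hx, rfl⟩) y (hy | ⟨y, hy, rfl⟩) <;>
      simp only [LinearMap.compl₁₂_apply, LinearMap.smul_apply, smul_eq_mul, hgP]
    · rw [hiso0 _ (hgN₀ x hx) _ (hgN₀ y hy), hiso0 x hx.1 y hy.1, mul_zero]
    · rw [hgC ⟨x, hx⟩, hgC ⟨y, hy⟩]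
      exact hh ⟨x, hx⟩ ⟨y, hy⟩
    · rw [hP_form, hP_form, hgC ⟨x, hx⟩, hgC ⟨y, hy⟩]
      exact hh ⟨x, hx⟩ ⟨y, hy⟩
    · rw [hiso1 _ (hPmem _ (hgN₀ x hx)) _ (hPmem _ (hgN₀ y hy)),
        hiso1 _ (hPmem x hx.1) _ (hPmem y hy.1), mul_zero]
  simpa using LinearMap.congr_fun₂ hB x y

end Extension

theorem exists_restrictTauFixed0_eq
    (hC : Submodule.span K₀ (tauFixed0 σ N₀ Pmap F : Set N) = N₀) (hP : N₀.map Pmap = N₁)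
    (hcompl : IsCompl N₀ N₁) (hPF : ∀ x, Pmap (F x) = F (Pmap x)) {a : K₀}
    (hPP : ∀ x, Pmap (Pmap x) = a • x) (hP_form : ∀ x y, form (Pmap x) y = form x (Pmap y))
    (hiso0 : ∀ x ∈ N₀, ∀ y ∈ N₀, form x y = 0) (hiso1 : ∀ x ∈ N₁, ∀ y ∈ N₁, form x y = 0)
    [FiniteDimensional (fixedSubfield σ) (tauFixed0 σ N₀ Pmap F)]
    (hdim : Module.finrank (fixedSubfield σ) (tauFixed0 σ N₀ Pmap F)
      + Module.finrank (fixedSubfield σ) (tauFixed0 σ N₀ Pmap F) = Module.finrank K₀ N)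
    {h : tauFixed0 σ N₀ Pmap F ≃ₗ[fixedSubfield σ] tauFixed0 σ N₀ Pmap F}
    (hh : h ∈ GSpGrp σ form N₀ Pmap F) :
    ∃ g, restrictTauFixed0 σ form N₀ N₁ Pmap F g = h := by
  obtain ⟨c, hc, hhc⟩ := hh
  obtain ⟨g, hgC, hgP⟩ := exists_linearEquiv_extend h hC hP hcompl hPP hdim
  obtain ⟨hg0, hg1⟩ := map_eq_of_eqOn_linearEquiv (g := g) hC hP hgC hgP
  refine ⟨⟨g, hg0, hg1, hgP, comm_F_of_eqOn_tauFixed0 hC hP hcompl (g := g) hgC hgP hPF,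
    c, fun h0 => hc (Subtype.ext h0),
    similitude_of_eqOn_tauFixed0 hC hP hcompl (g := g) hgC hgP hP_form hiso0 hiso1 hhc⟩, ?_⟩
  ext x
  exact hgC x

end Restriction

theorem statement_0_general
    (p : ℕ)
    (σ : K₀ ≃+* K₀)
    (hdimN : Module.finrank K₀ N = 8)
    (N₀ N₁ : Submodule K₀ N) (hcompl : IsCompl N₀ N₁)
    (form : N →ₗ[K₀] N →ₗ[K₀] K₀)
    (hnondeg : ∀ x, (∀ y, form x y = 0) → x = 0)
    (hiso0 : ∀ x ∈ N₀, ∀ y ∈ N₀, form x y = 0)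
    (hiso1 : ∀ x ∈ N₁, ∀ y ∈ N₁, form x y = 0)
    (F : N →ₛₗ[(σ : K₀ →+* K₀)] N)
    (hF_form : ∀ x y, form (F x) (F y) = (p : K₀) * σ (form x y))
    (Pmap : N →ₗ[K₀] N)
    (hP_bij : Function.Bijective Pmap)
    (hPP : ∀ x, Pmap (Pmap x) = (p : K₀) • x)
    (hPF : ∀ x, Pmap (F x) = F (Pmap x))
    (hP_form : ∀ x y, form (Pmap x) y = form x (Pmap y))
    (hP01 : Pmap '' (N₀ : Set N) = (N₁ : Set N))
    (hC_dim : Module.finrank ↥(fixedSubfield σ) ↥(tauFixed0 σ N₀ Pmap F) = 4)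
    (hC_span :
      Submodule.span K₀ ((tauFixed0 σ N₀ Pmap F : Submodule ↥(fixedSubfield σ) N) : Set N)
        = N₀) :
    ∃ Φ : ↥(Jgrp σ form N₀ N₁ Pmap F) ≃* ↥(GSpGrp σ form N₀ Pmap F),
      ∀ (g : ↥(Jgrp σ form N₀ N₁ Pmap F)) (x : N) (hx : x ∈ tauFixed0 σ N₀ Pmap F),
        (((Φ g : ↥(tauFixed0 σ N₀ Pmap F) ≃ₗ[↥(fixedSubfield σ)]
            ↥(tauFixed0 σ N₀ Pmap F)) ⟨x, hx⟩ : N)) = (g : N ≃ₗ[K₀] N) x := by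
  have : Nontrivial N := Module.nontrivial_of_finrank_pos (R := K₀) (by rw [hdimN]; norm_num)
  have : FiniteDimensional (fixedSubfield σ) (tauFixed0 σ N₀ Pmap F) :=
    .of_finrank_pos (by rw [hC_dim]; norm_num)
  have hp : (p : K₀) ≠ 0 := ne_zero_of_comp_self_eq_smul hP_bij.1 hPP
  have hform : form ≠ 0 := by
    obtain ⟨x, hx⟩ := exists_ne (0 : N)
    exact fun h0 => hx (hnondeg x fun y => by simp [h0])
  have hP : N₀.map Pmap = N₁ := SetLike.coe_injective (by rw [Submodule.map_coe, hP01])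
  let π := (restrictTauFixed0 σ form N₀ N₁ Pmap F).codRestrict _
    (restrictTauFixed0_mem_GSpGrp hp hF_form hform)
  refine ⟨MulEquiv.ofBijective π ⟨fun g₁ g₂ h => ?_, fun ⟨h, hh⟩ => ?_⟩, fun _ _ _ => rfl⟩
  · exact restrictTauFixed0_injective hC_span hP hcompl (congrArg Subtype.val h)
  · obtain ⟨g, hg⟩ := exists_restrictTauFixed0_eq hC_span hP hcompl hPF hPP hP_form hiso0 hiso1
      (by rw [hC_dim, hdimN]) hh
    exact ⟨g, Subtype.ext hg⟩

/-- Restriction to `C = N₀^{τ=1}` defines a group isomorphism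
`J_b(ℚ_p) ≅ GSp(C, (·,·)₀)`. -/
theorem statement_0
    (p : ℕ) (hp : Nat.Prime p) (hp_odd : p ≠ 2)
    {W₀ : Type*} [CommRing W₀] [IsDomain W₀] [IsDiscreteValuationRing W₀]
    [Algebra W₀ K₀] [IsFractionRing W₀ K₀]
    (hp_irr : Irreducible (p : W₀))
    (σ : K₀ ≃+* K₀)
    (hσW : ∀ c : W₀, ∃ c' : W₀, algebraMap W₀ K₀ c' = σ (algebraMap W₀ K₀ c))
    (hdimN : Module.finrank K₀ N = 8)
    (N₀ N₁ : Submodule K₀ N) (hcompl : IsCompl N₀ N₁)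
    (hdim0 : Module.finrank K₀ ↥N₀ = 4) (hdim1 : Module.finrank K₀ ↥N₁ = 4)
    (form : N →ₗ[K₀] N →ₗ[K₀] K₀)
    (halt : ∀ x, form x x = 0)
    (hnondeg : ∀ x, (∀ y, form x y = 0) → x = 0)
    (hiso0 : ∀ x ∈ N₀, ∀ y ∈ N₀, form x y = 0)
    (hiso1 : ∀ x ∈ N₁, ∀ y ∈ N₁, form x y = 0)
    (F : N →ₛₗ[(σ : K₀ →+* K₀)] N)
    (hF_bij : Function.Bijective F)
    (hF01 : F '' (N₀ : Set N) = (N₁ : Set N))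
    (hF10 : F '' (N₁ : Set N) = (N₀ : Set N))
    (hF_form : ∀ x y, form (F x) (F y) = (p : K₀) * σ (form x y))
    (Pmap : N →ₗ[K₀] N)
    (hP_bij : Function.Bijective Pmap)
    (hPP : ∀ x, Pmap (Pmap x) = (p : K₀) • x)
    (hPF : ∀ x, Pmap (F x) = F (Pmap x))
    (hP_form : ∀ x y, form (Pmap x) y = form x (Pmap y))
    (hP01 : Pmap '' (N₀ : Set N) = (N₁ : Set N))
    (hP10 : Pmap '' (N₁ : Set N) = (N₀ : Set N))
    (hC_dim : Module.finrank ↥(fixedSubfield σ) ↥(tauFixed0 σ N₀ Pmap F) = 4)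
    (hC_span :
      Submodule.span K₀ ((tauFixed0 σ N₀ Pmap F : Submodule ↥(fixedSubfield σ) N) : Set N)
        = N₀) :
    ∃ Φ : ↥(Jgrp σ form N₀ N₁ Pmap F) ≃* ↥(GSpGrp σ form N₀ Pmap F),
      ∀ (g : ↥(Jgrp σ form N₀ N₁ Pmap F)) (x : N) (hx : x ∈ tauFixed0 σ N₀ Pmap F),
        (((Φ g : ↥(tauFixed0 σ N₀ Pmap F) ≃ₗ[↥(fixedSubfield σ)]
            ↥(tauFixed0 σ N₀ Pmap F)) ⟨x, hx⟩ : N)) = (g : N ≃ₗ[K₀] N) x :=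
  statement_0_general p σ hdimN N₀ N₁ hcompl form hnondeg hiso0 hiso1 F hF_form Pmap hP_bij hPP hPF
    hP_form hP01 hC_dim hC_span

end QURZ
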